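/- Let (x_t)_{0≤t≤T+1} be iterates x_{t+1} = x_t − γ∇f_{i_t}(x_t) with 0 < γ ≤ 1/(8√3·L), let τ = ⌊1/(8√3·L·γ)⌋, and let (x̃_t) be the restart virtual sequence: x̃_0 = x_0, x̃_{t+1} = x̃_t − γ∇f(x_t) if (t+1) mod τ ≠ 0, and x̃_{t+1} = x_{t+1} if (t+1) mod τ = 0. Suppose σ_τ² is a finite constant such that ‖∑_{t=kτ}^{min{kτ+j,T}} (∇f_{i_t}(x) − ∇f(x))‖² ≤ σ_τ² for all x ∈ ℝ^d, all k = 0,…,⌊T/τ⌋ and all j = 0,…,τ−1. Then f(x̃_{T+1}) − f(x_0) ≤ −(γ/4)·∑_{t=0}^{T} ‖∇f(x_t)‖² + 2633·L²·γ³·(T+1)·σ_τ². -/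

import Mathlib

open scoped BigOperators RealInnerProductSpace

lemma arith_full (B G s : ℝ) (hG : 0 ≤ G) (hs : 0 ≤ s) (hB1 : 1/28 ≤ B) (hB2 : B ≤ 3/41) :
    13/10*B*(G+s)*G + (G+13/10*B*(G+s))*(s+13/5*B*(G+s)) + B*(G^2+(s+13/5*B*(G+s))^2)
      ≤ 3/4*G^2 + 2633*B^2*s^2 := by
  nlinarith [sq_nonneg (61/100*G - 119/100*s), sq_nonneg (G-s), sq_nonneg (G+s), mul_nonneg hG hs,
    mul_nonneg (mul_nonneg hG hs) (sub_nonneg.2 hB2), sq_nonneg (G-2*s), sq_nonneg (G-3*s),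
    mul_nonneg (mul_nonneg hG hG) (sub_nonneg.2 hB2), mul_nonneg (mul_nonneg hs hs) (sub_nonneg.2 hB1),
    mul_nonneg (mul_nonneg hs hs) (sub_nonneg.2 hB2), sq_nonneg B, mul_nonneg hs hG]

lemma arith_partial (B G s : ℝ) (hG : 0 ≤ G) (hs : 0 ≤ s) (hB1 : 0 < B) (hB2 : B ≤ 3/41) :
    13/10*B*(G+s)*G + B*G^2 ≤ 3/4*G^2 + 2633*B^2*s^2 := by
  nlinarith [sq_nonneg (G - 3250*B*s), mul_nonneg hG hs, mul_nonneg (mul_nonneg hG hG) (sub_nonneg.2 hB2),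
    mul_nonneg (mul_nonneg hs hG) (sub_nonneg.2 hB2), mul_pos hB1 hB1, sq_nonneg (G-s)]

lemma scaled (L γ m G s Q ga Ee : ℝ) (hL : 0 < L) (hγ : 0 < γ) (hm : 1 ≤ m)
    (hG : 0 ≤ G) (hs : 0 ≤ s) (hQ : 0 ≤ Q) (hga : 0 ≤ ga) (hEe : 0 ≤ Ee)
    (hGQ : G^2 ≤ m*Q) (hgam : m*ga ≤ G + 13/10*(L*γ*m)*(G+s))
    (hB2 : L*γ*m ≤ 3/41)
    (hcase : (Ee = 0) ∨ (1/28 ≤ L*γ*m ∧ Ee ≤ s + 13/5*(L*γ*m)*(G+s))) :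
    γ*(L*(13/10*γ*(G+s))*G) + γ*(ga*Ee) + L*γ^2*G^2 + L*γ^2*Ee^2
      ≤ 3/4*(γ*Q) + 2633*L^2*γ^3*m*s^2 := by
  have hm0 : (0:ℝ) < m := lt_of_lt_of_le one_pos hm
  have hB0 : 0 < L*γ*m := by positivity
  rw [← mul_le_mul_iff_right₀ hm0]
  rcases hcase with h | ⟨hB1, hEe2⟩
  · subst h
    have h3 := arith_partial (L*γ*m) G s hG hs hB0 hB2
    nlinarith [mul_le_mul_of_nonneg_left hGQ (le_of_lt hγ), mul_pos hγ hm0,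
      mul_le_mul_of_nonneg_left h3 (le_of_lt hγ)]
  · have hZ1 : 0 ≤ G + 13/10*(L*γ*m)*(G+s) := by positivity
    have hZ2 : 0 ≤ s + 13/5*(L*γ*m)*(G+s) := by positivity
    have h1 : (m*ga)*Ee ≤ (G + 13/10*(L*γ*m)*(G+s))*(s + 13/5*(L*γ*m)*(G+s)) :=
      mul_le_mul hgam hEe2 hEe hZ1
    have h2 : Ee^2 ≤ (s + 13/5*(L*γ*m)*(G+s))^2 := by nlinarith
    have h3 := arith_full (L*γ*m) G s hG hs hB1 hB2
    nlinarith [mul_le_mul_of_nonneg_left hGQ (le_of_lt hγ),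
      mul_le_mul_of_nonneg_left h3 (le_of_lt hγ),
      mul_le_mul_of_nonneg_left h1 (le_of_lt hγ),
      mul_le_mul_of_nonneg_left h2 (le_of_lt (mul_pos hγ hB0))]

section descent
variable {F : Type*} [NormedAddCommGroup F] [InnerProductSpace ℝ F] [CompleteSpace F]

lemma descent_lemma (f : F → ℝ) (L : ℝ) (hL : 0 ≤ L)
    (hd : Differentiable ℝ f)
    (hlip : ∀ p q : F, ‖gradient f p - gradient f q‖ ≤ L * ‖p - q‖)
    (x y : F) :
    f y ≤ f x + ⟪gradient f x, y - x⟫ + L / 2 * ‖y - x‖ ^ 2 := by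
  set v := y - x with hv
  have hpath : ∀ t : ℝ, HasDerivAt (fun s : ℝ => x + s • v) v t := by
    intro t
    simpa using ((hasDerivAt_id t).smul_const v).const_add x
  have hφ : ∀ t : ℝ, HasDerivAt (fun s : ℝ => f (x + s • v))
      (⟪gradient f (x + t • v), v⟫) t := by
    intro t
    have h1 : HasFDerivAt f
        ((InnerProductSpace.toDual ℝ F) (gradient f (x + t • v))) (x + t • v) :=
      (hd _).hasGradientAt.hasFDerivAt
    have h2 := h1.comp_hasDerivAt t (hpath t)
    simp at h2 ⊢
    exact h2
  have hgradcont : Continuous fun t : ℝ => gradient f (x + t • v) := by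
    have hlw : LipschitzWith (Real.toNNReal L) (gradient f) := by
      apply LipschitzWith.of_dist_le_mul
      intro p q
      rw [dist_eq_norm, dist_eq_norm]
      calc ‖gradient f p - gradient f q‖ ≤ L * ‖p - q‖ := hlip p q
        _ ≤ Real.toNNReal L * ‖p - q‖ := by
            gcongr
            exact (Real.coe_toNNReal L hL).ge
    exact hlw.continuous.comp (by continuity)
  have hcont : Continuous fun t : ℝ => ⟪gradient f (x + t • v), v⟫ :=
    hgradcont.inner continuous_const
  have hint : (∫ t in (0:ℝ)..1, ⟪gradient f (x + t • v), v⟫) = f y - f x := by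
    have := intervalIntegral.integral_eq_sub_of_hasDerivAt
      (f := fun s : ℝ => f (x + s • v))
      (f' := fun t : ℝ => ⟪gradient f (x + t • v), v⟫)
      (a := 0) (b := 1)
      (fun t _ => hφ t) (hcont.intervalIntegrable 0 1)
    simpa [hv] using this
  have hptb : ∀ t ∈ Set.Icc (0:ℝ) 1,
      ⟪gradient f (x + t • v), v⟫ ≤ ⟪gradient f x, v⟫ + L * t * ‖v‖ ^ 2 := by
    intro t ht
    have h1 : ⟪gradient f (x + t • v), v⟫ - ⟪gradient f x, v⟫
        = ⟪gradient f (x + t • v) - gradient f x, v⟫ := by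
      rw [inner_sub_left]
    have h2 : ⟪gradient f (x + t • v) - gradient f x, v⟫
        ≤ ‖gradient f (x + t • v) - gradient f x‖ * ‖v‖ :=
      real_inner_le_norm _ _
    have h3 : ‖gradient f (x + t • v) - gradient f x‖ ≤ L * (t * ‖v‖) := by
      have := hlip (x + t • v) x
      simpa [norm_smul, abs_of_nonneg ht.1, mul_assoc] using this
    nlinarith [norm_nonneg v, mul_le_mul_of_nonneg_right h3 (norm_nonneg v)]
  have hintle : (∫ t in (0:ℝ)..1, ⟪gradient f (x + t • v), v⟫)
      ≤ ∫ t in (0:ℝ)..1, (⟪gradient f x, v⟫ + L * t * ‖v‖ ^ 2) := by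
    apply intervalIntegral.integral_mono_on (by norm_num)
      (hcont.intervalIntegrable 0 1)
      ((continuous_const.add ((continuous_const.mul continuous_id).mul continuous_const)).intervalIntegrable 0 1)
    intro t ht
    exact hptb t ht
  have hrhs : (∫ t in (0:ℝ)..1, (⟪gradient f x, v⟫ + L * t * ‖v‖ ^ 2))
      = ⟪gradient f x, v⟫ + L / 2 * ‖v‖ ^ 2 := by
    have h1 : (∫ t in (0:ℝ)..1, (⟪gradient f x, v⟫ + L * t * ‖v‖ ^ 2))
        = (∫ _t in (0:ℝ)..1, ⟪gradient f x, v⟫) + ∫ t in (0:ℝ)..1, L * t * ‖v‖ ^ 2 :=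
      intervalIntegral.integral_add intervalIntegrable_const
        ((by continuity : Continuous fun t : ℝ => L * t * ‖v‖ ^ 2).intervalIntegrable 0 1)
    have h2 : (∫ t in (0:ℝ)..1, L * t * ‖v‖ ^ 2)
        = L * ‖v‖ ^ 2 * ∫ t in (0:ℝ)..1, t := by
      rw [← intervalIntegral.integral_const_mul]
      congr 1; funext t; ring
    rw [h1, h2, integral_id]
    simp
    ring
  linarith [hint, hintle, hrhs]

end descent

section grad
variable {F : Type*} [NormedAddCommGroup F] [InnerProductSpace ℝ F] [CompleteSpace F]

lemma gradient_avg {n : ℕ} (f' : Fin n → F → ℝ) (hdiff : ∀ i, Differentiable ℝ (f' i))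
    (c : ℝ) (p : F) :
    gradient (fun x => c * ∑ i, f' i x) p = c • ∑ i, gradient (f' i) p := by
  have hfd : HasFDerivAt (fun x => c * ∑ i, f' i x)
      (c • ∑ i, fderiv ℝ (f' i) p) p := by
    have hsum : HasFDerivAt (fun x => ∑ i, f' i x) (∑ i, fderiv ℝ (f' i) p) p := by
      simpa using HasFDerivAt.fun_sum (fun i _ => ((hdiff i) p).hasFDerivAt)
    simpa using hsum.const_mul c
  have : gradient (fun x => c * ∑ i, f' i x) p
      = (InnerProductSpace.toDual ℝ F).symm (c • ∑ i, fderiv ℝ (f' i) p) := by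
    rw [gradient, hfd.fderiv]
  rw [this, map_smul, map_sum]
  congr 1
end grad

section epoch
variable {F : Type*} [NormedAddCommGroup F] [InnerProductSpace ℝ F] [CompleteSpace F]

omit [CompleteSpace F] in
lemma iter_unfold (u w : ℕ → F) (γ : ℝ) (a m : ℕ)
    (hrec : ∀ t, a ≤ t → t < a + m → u (t+1) = u t - γ • w t) :
    ∀ j ≤ m, u (a+j) = u a - γ • ∑ t ∈ Finset.Ico a (a+j), w t := by
  intro j hj
  induction j with
  | zero => simp
  | succ j ih =>
    have hj' : j ≤ m := Nat.le_of_succ_le hj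
    have h1 : u (a+j+1) = u (a+j) - γ • w (a+j) :=
      hrec (a+j) (Nat.le_add_right a j) (by omega)
    rw [show a + (j+1) = a + j + 1 from rfl, h1, ih hj',
      Finset.sum_Ico_succ_top (Nat.le_add_right a j), smul_add, sub_sub]

lemma epoch_drift (f : F → ℝ) (L γ s : ℝ) (hL : 0 < L) (hγ : 0 < γ) (hs0 : 0 ≤ s)
    (u w : ℕ → F) (a m : ℕ) (hm : 1 ≤ m)
    (hrec : ∀ t, a ≤ t → t < a + m → u (t+1) = u t - γ • w t)
    (hB2 : L*γ*m ≤ 3/41)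
    (hE : ∀ j < m, ‖∑ t ∈ Finset.Ico a (a+j+1), (w t - gradient f (u t))‖
        ≤ s + 2*L*∑ t ∈ Finset.Ico a (a+j+1), ‖u t - u a‖) :
    ∀ j ≤ m, ‖u (a+j) - u a‖ ≤ 13/10*γ*((∑ t ∈ Finset.Ico a (a+m), ‖gradient f (u t)‖)+s) ∧
      ∑ t ∈ Finset.Ico a (a+j), ‖u t - u a‖
        ≤ j * (13/10*γ*((∑ t ∈ Finset.Ico a (a+m), ‖gradient f (u t)‖)+s)) := by
  set G := ∑ t ∈ Finset.Ico a (a+m), ‖gradient f (u t)‖ with hG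
  have hGnn : 0 ≤ G := Finset.sum_nonneg fun t _ => norm_nonneg _
  intro j hj
  induction j with
  | zero => simpa using by positivity
  | succ j ih =>
    obtain ⟨ih1, ih2⟩ := ih (Nat.le_of_succ_le hj)
    have hsum1 : ∑ t ∈ Finset.Ico a (a+(j+1)), ‖u t - u a‖ ≤ (j+1) * (13/10*γ*(G+s)) := by
      rw [show a+(j+1) = a+j+1 from rfl, Finset.sum_Ico_succ_top (Nat.le_add_right a j)]
      push_cast
      nlinarith [ih1, ih2]
    refine ⟨?_, by push_cast; exact hsum1⟩
    have hunf := iter_unfold u w γ a m hrec (j+1) hj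
    rw [hunf, show u a - γ • ∑ t ∈ Finset.Ico a (a+(j+1)), w t - u a
        = -(γ • ∑ t ∈ Finset.Ico a (a+(j+1)), w t) by abel,
      norm_neg, norm_smul, Real.norm_eq_abs, abs_of_pos hγ]
    have hsplit : ∑ t ∈ Finset.Ico a (a+(j+1)), w t
        = (∑ t ∈ Finset.Ico a (a+(j+1)), gradient f (u t))
          + ∑ t ∈ Finset.Ico a (a+(j+1)), (w t - gradient f (u t)) := by
      rw [← Finset.sum_add_distrib]
      exact Finset.sum_congr rfl fun t _ => by abel
    have h1 : ‖∑ t ∈ Finset.Ico a (a+(j+1)), gradient f (u t)‖ ≤ G := by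
      refine (norm_sum_le _ _).trans ?_
      refine Finset.sum_le_sum_of_subset_of_nonneg ?_ fun t _ _ => norm_nonneg _
      exact Finset.Ico_subset_Ico le_rfl (by omega)
    have h2 := hE j (by omega)
    have h3 : ∑ t ∈ Finset.Ico a (a+j+1), ‖u t - u a‖ ≤ (j+1) * (13/10*γ*(G+s)) := hsum1
    have h4 : ‖∑ t ∈ Finset.Ico a (a+(j+1)), w t‖
        ≤ G + (s + 2*L*((j+1) * (13/10*γ*(G+s)))) := by
      rw [hsplit]
      refine (norm_add_le _ _).trans ?_
      have := h2.trans (by nlinarith [h3] : s + 2*L*∑ t ∈ Finset.Ico a (a+j+1), ‖u t - u a‖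
          ≤ s + 2*L*((j+1) * (13/10*γ*(G+s))))
      exact add_le_add h1 this
    have hjm : ((j:ℝ)+1) ≤ (m:ℝ) := by exact_mod_cast hj
    have hLγm : 0 ≤ L*γ*((j:ℝ)+1) := by positivity
    calc γ * ‖∑ t ∈ Finset.Ico a (a+(j+1)), w t‖
        ≤ γ * (G + (s + 2*L*((j+1) * (13/10*γ*(G+s))))) := by
          exact mul_le_mul_of_nonneg_left h4 hγ.le
      _ ≤ 13/10*γ*(G+s) := by
          have hB3 : L*γ*((j:ℝ)+1) ≤ 3/41 := by nlinarith [mul_pos hL hγ]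
          nlinarith [mul_pos hL hγ, mul_nonneg (mul_nonneg hL.le hγ.le) (add_nonneg hGnn hs0),
            mul_le_mul_of_nonneg_right hB3 (add_nonneg hGnn hs0)]
lemma sq_add_le_two_sq (A B C : ℝ) (hA : 0 ≤ A) (h : A ≤ B + C) : A^2 ≤ 2*B^2 + 2*C^2 := by
  nlinarith [sq_nonneg (B-C), sq_nonneg (B+C)]

lemma epoch_lemma (f : F → ℝ) (L γ s : ℝ) (hL : 0 < L) (hγ : 0 < γ) (hs0 : 0 ≤ s)
    (hdesc : ∀ p q : F, f q ≤ f p + ⟪gradient f p, q - p⟫ + L/2 * ‖q - p‖^2)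
    (hflip : ∀ p q : F, ‖gradient f p - gradient f q‖ ≤ L * ‖p - q‖)
    (u w : ℕ → F) (a m : ℕ) (hm : 1 ≤ m)
    (hrec : ∀ t, a ≤ t → t < a + m → u (t+1) = u t - γ • w t)
    (hB2 : L*γ*m ≤ 3/41)
    (hE : ∀ j < m, ‖∑ t ∈ Finset.Ico a (a+j+1), (w t - gradient f (u t))‖
        ≤ s + 2*L*∑ t ∈ Finset.Ico a (a+j+1), ‖u t - u a‖)
    (E : F)
    (hcase : E = 0 ∨ (1/28 ≤ L*γ*m ∧
      ‖E‖ ≤ s + 2*L*∑ t ∈ Finset.Ico a (a+m), ‖u t - u a‖))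
    (q : F) (hq : q = u a - γ • ((∑ t ∈ Finset.Ico a (a+m), gradient f (u t)) + E)) :
    f q ≤ f (u a) - γ/4 * ∑ t ∈ Finset.Ico a (a+m), ‖gradient f (u t)‖^2
        + 2633*L^2*γ^3*m*s^2 := by
  have hdrift := epoch_drift f L γ s hL hγ hs0 u w a m hm hrec hB2 hE
  obtain ⟨G, hGdef⟩ : ∃ v : ℝ, v = ∑ t ∈ Finset.Ico a (a+m), ‖gradient f (u t)‖ := ⟨_, rfl⟩
  obtain ⟨Q, hQdef⟩ : ∃ v : ℝ, v = ∑ t ∈ Finset.Ico a (a+m), ‖gradient f (u t)‖^2 := ⟨_, rfl⟩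
  obtain ⟨S, hSdef⟩ : ∃ v : F, v = ∑ t ∈ Finset.Ico a (a+m), gradient f (u t) := ⟨_, rfl⟩
  obtain ⟨ga, hgadef⟩ : ∃ v : F, v = gradient f (u a) := ⟨_, rfl⟩
  obtain ⟨c, hc⟩ : ∃ v : ℝ, v = 13/10*γ*(G + s) := ⟨_, rfl⟩
  rw [← hQdef]
  rw [← hSdef] at hq
  have hGnn : 0 ≤ G := hGdef ▸ Finset.sum_nonneg fun t _ => norm_nonneg _
  have hQnn : 0 ≤ Q := hQdef ▸ Finset.sum_nonneg fun t _ => sq_nonneg _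
  simp only [← hGdef, ← hc] at hdrift
  have hDall : ∀ t ∈ Finset.Ico a (a+m), ‖u t - u a‖ ≤ c := by
    intro t ht
    rw [Finset.mem_Ico] at ht
    have h1 := (hdrift (t-a) (by omega)).1
    rwa [Nat.add_sub_cancel' ht.1] at h1
  have hDsum : ∑ t ∈ Finset.Ico a (a+m), ‖u t - u a‖ ≤ m * c := (hdrift m le_rfl).2
  have hcnn : 0 ≤ c := by rw [hc]; positivity
  have hcard : (Finset.Ico a (a+m)).card = m := by rw [Nat.card_Ico]; omega
  have hGQ : G^2 ≤ m*Q := by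
    rw [hGdef, hQdef]
    have h := sq_sum_le_card_mul_sum_sq (s := Finset.Ico a (a+m))
      (f := fun t => ‖gradient f (u t)‖)
    rwa [hcard] at h
  have hgam : (m:ℝ) * ‖ga‖ ≤ G + 13/10*(L*γ*m)*(G+s) := by
    have h1 : ∀ t ∈ Finset.Ico a (a+m), ‖ga‖ ≤ ‖gradient f (u t)‖ + L*‖u t - u a‖ := by
      intro t ht
      have h2 : ‖ga - gradient f (u t)‖ ≤ L * ‖u t - u a‖ := by
        rw [hgadef, norm_sub_rev (u t) (u a)] at *
        exact (hflip (u a) (u t)).trans (le_of_eq (by rw [norm_sub_rev]))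
      calc ‖ga‖ = ‖gradient f (u t) + (ga - gradient f (u t))‖ := by
            rw [show gradient f (u t) + (ga - gradient f (u t)) = ga by abel]
        _ ≤ ‖gradient f (u t)‖ + ‖ga - gradient f (u t)‖ := norm_add_le _ _
        _ ≤ ‖gradient f (u t)‖ + L*‖u t - u a‖ := by linarith
    have h3 := Finset.sum_le_sum h1
    rw [Finset.sum_const, nsmul_eq_mul, hcard] at h3
    have h4 : ∑ t ∈ Finset.Ico a (a+m), (‖gradient f (u t)‖ + L*‖u t - u a‖)
        = G + L * ∑ t ∈ Finset.Ico a (a+m), ‖u t - u a‖ := by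
      rw [Finset.sum_add_distrib, ← Finset.mul_sum, hGdef]
    rw [h4] at h3
    have h5 : L * ∑ t ∈ Finset.Ico a (a+m), ‖u t - u a‖ ≤ L * ((m:ℝ)*c) :=
      mul_le_mul_of_nonneg_left hDsum hL.le
    have h6 : L * ((m:ℝ)*c) = 13/10*(L*γ*(m:ℝ))*(G+s) := by rw [hc]; ring
    linarith
  have hinner : Q - L*c*G ≤ ⟪ga, S⟫ := by
    rw [hSdef, inner_sum]
    have h1 : ∀ t ∈ Finset.Ico a (a+m),
        ‖gradient f (u t)‖^2 - L*c*‖gradient f (u t)‖ ≤ ⟪ga, gradient f (u t)⟫ := by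
      intro t ht
      have e1 : ⟪ga, gradient f (u t)⟫
          = ‖gradient f (u t)‖^2 + ⟪ga - gradient f (u t), gradient f (u t)⟫ := by
        rw [inner_sub_left, real_inner_self_eq_norm_sq]
        ring
      have e2 := abs_real_inner_le_norm (ga - gradient f (u t)) (gradient f (u t))
      have e3 : ‖ga - gradient f (u t)‖ ≤ L*c := by
        rw [hgadef]
        refine (hflip (u a) (u t)).trans ?_
        rw [norm_sub_rev]
        exact mul_le_mul_of_nonneg_left (hDall t ht) hL.le
      have e4 : ‖ga - gradient f (u t)‖ * ‖gradient f (u t)‖ ≤ L*c*‖gradient f (u t)‖ :=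
        mul_le_mul_of_nonneg_right e3 (norm_nonneg _)
      nlinarith [abs_le.1 e2]
    calc Q - L*c*G = ∑ t ∈ Finset.Ico a (a+m),
          (‖gradient f (u t)‖^2 - L*c*‖gradient f (u t)‖) := by
          rw [Finset.sum_sub_distrib, ← Finset.mul_sum, ← hQdef, ← hGdef]
      _ ≤ ∑ t ∈ Finset.Ico a (a+m), ⟪ga, gradient f (u t)⟫ := Finset.sum_le_sum h1
  have hSG : ‖S‖ ≤ G := by rw [hSdef, hGdef]; exact norm_sum_le _ _
  have hcase' : ‖E‖ = 0 ∨ (1/28 ≤ L*γ*m ∧ ‖E‖ ≤ s + 13/5*(L*γ*m)*(G+s)) := by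
    rcases hcase with h | ⟨h1, h2⟩
    · left; rw [h, norm_zero]
    · right
      refine ⟨h1, h2.trans ?_⟩
      have h5 : 2*L * ∑ t ∈ Finset.Ico a (a+m), ‖u t - u a‖ ≤ 2*L * ((m:ℝ)*c) :=
        mul_le_mul_of_nonneg_left hDsum (by positivity)
      have h6 : 2*L*((m:ℝ)*c) = 13/5*(L*γ*(m:ℝ))*(G+s) := by rw [hc]; ring
      linarith
  have hq' : q - u a = -(γ • (S + E)) := by rw [hq]; abel
  have hmain := hdesc (u a) q
  rw [hq', ← hgadef] at hmain
  have hin : ⟪ga, -(γ • (S+E))⟫ = -(γ * (⟪ga,S⟫ + ⟪ga,E⟫)) := by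
    rw [inner_neg_right, real_inner_smul_right, inner_add_right]
  have hno : ‖-(γ • (S+E))‖^2 = γ^2*‖S+E‖^2 := by
    rw [norm_neg, norm_smul, Real.norm_eq_abs, abs_of_pos hγ, mul_pow]
  have hSE : ‖S+E‖^2 ≤ 2*G^2 + 2*‖E‖^2 :=
    sq_add_le_two_sq _ _ _ (norm_nonneg _) ((norm_add_le _ _).trans (by linarith))
  have hgaE : -(‖ga‖*‖E‖) ≤ ⟪ga, E⟫ := by
    have e := abs_le.1 (abs_real_inner_le_norm ga E)
    linarith [e.1]
  have hscaled := scaled L γ (m:ℝ) G s Q ‖ga‖ ‖E‖ hL hγ (by exact_mod_cast hm)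
    hGnn hs0 hQnn (norm_nonneg _) (norm_nonneg _) hGQ hgam hB2 hcase'
  have hfq : f q ≤ f (u a) - γ * (⟪ga,S⟫ + ⟪ga,E⟫) + L/2 * (γ^2*‖S+E‖^2) := by
    rw [hin, hno] at hmain
    linarith
  have hstep : f q ≤ f (u a) - γ*Q
      + (γ*(L*c*G) + γ*(‖ga‖*‖E‖) + L*γ^2*G^2 + L*γ^2*‖E‖^2) := by
    have k1 : Q - L*c*G - ‖ga‖*‖E‖ ≤ ⟪ga,S⟫ + ⟪ga,E⟫ := by linarith
    have k1' := mul_le_mul_of_nonneg_left k1 hγ.le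
    have k3' := mul_le_mul_of_nonneg_left hSE (by positivity : (0:ℝ) ≤ L/2*γ^2)
    linarith [hfq, k1', k3']
  have hscaled' : γ*(L*c*G) + γ*(‖ga‖*‖E‖) + L*γ^2*G^2 + L*γ^2*‖E‖^2
      ≤ 3/4*(γ*Q) + 2633*L^2*γ^3*m*s^2 := by
    rw [hc]
    exact hscaled
  linarith

end epoch

open scoped BigOperators RealInnerProductSpace


set_option maxHeartbeats 1000000 in
/-- Summed descent inequality for the restart virtual sequence (final estimate
in the proof of Theorem 1):
f(x̃_{T+1}) − f(x₀) ≤ −(γ/4)·∑_{t=0}^{T} ‖∇f(x_t)‖² + 2633·L²·γ³·(T+1)·σ_τ². -/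
theorem stmt_15
    (d n : ℕ) (hd : 1 ≤ d) (hn : 1 ≤ n)
    (L : ℝ) (hL : 0 < L)
    (f' : Fin n → EuclideanSpace ℝ (Fin d) → ℝ)
    (hdiff : ∀ i, Differentiable ℝ (f' i))
    (hlip : ∀ i (x y : EuclideanSpace ℝ (Fin d)),
      ‖gradient (f' i) x - gradient (f' i) y‖ ≤ L * ‖x - y‖)
    (f : EuclideanSpace ℝ (Fin d) → ℝ)
    (hf : f = fun x => (1 / n : ℝ) * ∑ i, f' i x)
    (γ : ℝ) (hγ0 : 0 < γ) (hγ : γ ≤ 1 / (8 * Real.sqrt 3 * L))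
    (T : ℕ)
    (idx : ℕ → Fin n)
    (x : ℕ → EuclideanSpace ℝ (Fin d))
    (hx : ∀ t, x (t + 1) = x t - γ • gradient (f' (idx t)) (x t))
    (τ : ℕ) (hτ : τ = ⌊1 / (8 * Real.sqrt 3 * L * γ)⌋₊)
    (xt : ℕ → EuclideanSpace ℝ (Fin d))
    (hxt0 : xt 0 = x 0)
    (hxt : ∀ t, ((t + 1) % τ ≠ 0 → xt (t + 1) = xt t - γ • gradient f (x t)) ∧
      ((t + 1) % τ = 0 → xt (t + 1) = x (t + 1)))
    (σ2 : ℝ)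
    (hσ : ∀ y : EuclideanSpace ℝ (Fin d), ∀ k ≤ T / τ, ∀ j < τ,
      ‖∑ t ∈ Finset.Icc (k * τ) (min (k * τ + j) T),
          (gradient (f' (idx t)) y - gradient f y)‖ ^ 2 ≤ σ2) :
    f (xt (T + 1)) - f (x 0) ≤
      -(γ / 4) * ∑ t ∈ Finset.range (T + 1), ‖gradient f (x t)‖ ^ 2 +
        2633 * L ^ 2 * γ ^ 3 * (T + 1) * σ2 := by
  have hn0 : (0:ℝ) < n := by exact_mod_cast hn
  -- differentiability of f
  have hfd : Differentiable ℝ f := by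
    rw [hf]
    exact (Differentiable.fun_sum fun i _ => hdiff i).const_mul _
  -- gradient of f
  have hgradf : ∀ p, gradient f p = (1/n : ℝ) • ∑ i, gradient (f' i) p := by
    intro p
    rw [hf]
    exact gradient_avg f' hdiff _ p
  -- Lipschitz gradient of f
  have hflipf : ∀ p q, ‖gradient f p - gradient f q‖ ≤ L * ‖p - q‖ := by
    intro p q
    rw [hgradf p, hgradf q, ← smul_sub, ← Finset.sum_sub_distrib]
    rw [norm_smul, Real.norm_eq_abs, abs_of_pos (by positivity : (0:ℝ) < 1/n)]
    have h1 : ‖∑ i : Fin n, (gradient (f' i) p - gradient (f' i) q)‖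
        ≤ ∑ i : Fin n, (L * ‖p - q‖) := by
      refine (norm_sum_le _ _).trans ?_
      exact Finset.sum_le_sum fun i _ => hlip i p q
    rw [Finset.sum_const, Finset.card_univ, Fintype.card_fin, nsmul_eq_mul] at h1
    calc (1/n : ℝ) * ‖∑ i : Fin n, (gradient (f' i) p - gradient (f' i) q)‖
        ≤ (1/n : ℝ) * ((n:ℝ) * (L * ‖p - q‖)) := by
          exact mul_le_mul_of_nonneg_left h1 (by positivity)
      _ = L * ‖p - q‖ := by field_simp
  have hdesc : ∀ p q, f q ≤ f p + ⟪gradient f p, q - p⟫ + L/2 * ‖q - p‖^2 :=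
    fun p q => descent_lemma f L hL.le hfd hflipf p q
  -- facts about sqrt 3
  have hsqrt3sq : Real.sqrt 3 ^ 2 = 3 := Real.sq_sqrt (by norm_num)
  have hsqrt3nn : 0 < Real.sqrt 3 := Real.sqrt_pos.2 (by norm_num)
  have h41 : (41:ℝ)/24 ≤ Real.sqrt 3 := by nlinarith
  have h74 : Real.sqrt 3 ≤ 7/4 := by nlinarith
  -- facts about τ
  have h8pos : (0:ℝ) < 8 * Real.sqrt 3 * L * γ := by positivity
  have hγ1 : 8 * Real.sqrt 3 * L * γ ≤ 1 := by
    rw [le_div_iff₀ (by positivity : (0:ℝ) < 8 * Real.sqrt 3 * L)] at hγ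
    nlinarith
  have hτpos : 0 < τ := by
    rw [hτ]
    apply Nat.floor_pos.2
    rw [le_div_iff₀ h8pos]
    linarith
  have hτ1R : (1:ℝ) ≤ (τ:ℝ) := by exact_mod_cast hτpos
  have hτle : (τ:ℝ) * (8 * Real.sqrt 3 * L * γ) ≤ 1 := by
    have h := Nat.floor_le (by positivity : (0:ℝ) ≤ 1 / (8 * Real.sqrt 3 * L * γ))
    rw [← hτ] at h
    rw [← le_div_iff₀ h8pos] at *
    exact h
  have hτge : 1 < ((τ:ℝ) + 1) * (8 * Real.sqrt 3 * L * γ) := by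
    have h := Nat.lt_floor_add_one (1 / (8 * Real.sqrt 3 * L * γ))
    rw [← hτ] at h
    rw [div_lt_iff₀ h8pos] at h
    exact_mod_cast h
  have hXnn : (0:ℝ) ≤ L * γ * τ := by positivity
  have hB2 : L * γ * (τ:ℝ) ≤ 3/41 := by
    nlinarith [mul_nonneg (sub_nonneg.2 h41) hXnn]
  have hB1 : (1:ℝ)/28 ≤ L * γ * (τ:ℝ) := by
    nlinarith [mul_nonneg (sub_nonneg.2 hτ1R) (by positivity : (0:ℝ) ≤ 8 * Real.sqrt 3 * L * γ),
      mul_nonneg (sub_nonneg.2 h74) hXnn]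
  -- σ2 nonneg and s
  have hσ2nn : 0 ≤ σ2 :=
    le_trans (sq_nonneg _) (hσ 0 0 (Nat.zero_le _) 0 hτpos)
  obtain ⟨s, hsdef⟩ : ∃ v : ℝ, v = Real.sqrt σ2 := ⟨_, rfl⟩
  have hs0 : 0 ≤ s := hsdef ▸ Real.sqrt_nonneg _
  have hss : s^2 = σ2 := by rw [hsdef]; exact Real.sq_sqrt hσ2nn
  -- window deviation bound
  have hEall : ∀ k ≤ T / τ, ∀ j, j < τ → k*τ + j ≤ T →
      ‖∑ t ∈ Finset.Ico (k*τ) (k*τ+j+1),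
          (gradient (f' (idx t)) (x t) - gradient f (x t))‖
        ≤ s + 2*L*∑ t ∈ Finset.Ico (k*τ) (k*τ+j+1), ‖x t - x (k*τ)‖ := by
    intro k hk j hj hjT
    have h1 : ‖∑ t ∈ Finset.Ico (k*τ) (k*τ+j+1),
        (gradient (f' (idx t)) (x (k*τ)) - gradient f (x (k*τ)))‖ ≤ s := by
      have h2 := hσ (x (k*τ)) k hk j hj
      rw [min_eq_left hjT] at h2
      rw [← Finset.Ico_add_one_right_eq_Icc] at h2
      have h3 := Real.sqrt_le_sqrt h2
      rwa [Real.sqrt_sq (norm_nonneg _), ← hsdef] at h3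
    have h2 : ∀ t, (gradient (f' (idx t)) (x t) - gradient f (x t))
        = (gradient (f' (idx t)) (x (k*τ)) - gradient f (x (k*τ)))
          + ((gradient (f' (idx t)) (x t) - gradient (f' (idx t)) (x (k*τ)))
            - (gradient f (x t) - gradient f (x (k*τ)))) := by
      intro t; abel
    calc ‖∑ t ∈ Finset.Ico (k*τ) (k*τ+j+1),
          (gradient (f' (idx t)) (x t) - gradient f (x t))‖
        = ‖(∑ t ∈ Finset.Ico (k*τ) (k*τ+j+1),
            (gradient (f' (idx t)) (x (k*τ)) - gradient f (x (k*τ))))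
          + ∑ t ∈ Finset.Ico (k*τ) (k*τ+j+1),
            ((gradient (f' (idx t)) (x t) - gradient (f' (idx t)) (x (k*τ)))
              - (gradient f (x t) - gradient f (x (k*τ))))‖ := by
          rw [← Finset.sum_add_distrib]
          congr 1
          exact Finset.sum_congr rfl fun t _ => h2 t
      _ ≤ s + 2*L*∑ t ∈ Finset.Ico (k*τ) (k*τ+j+1), ‖x t - x (k*τ)‖ := by
          refine (norm_add_le _ _).trans (add_le_add h1 ?_)
          refine (norm_sum_le _ _).trans ?_
          rw [Finset.mul_sum]
          refine Finset.sum_le_sum fun t _ => ?_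
          refine (norm_sub_le _ _).trans ?_
          have e1 := hlip (idx t) (x t) (x (k*τ))
          have e2 := hflipf (x t) (x (k*τ))
          calc ‖gradient (f' (idx t)) (x t) - gradient (f' (idx t)) (x (k*τ))‖
                + ‖gradient f (x t) - gradient f (x (k*τ))‖
              ≤ L * ‖x t - x (k*τ)‖ + L * ‖x t - x (k*τ)‖ := add_le_add e1 e2
            _ = 2*L*‖x t - x (k*τ)‖ := by ring
  -- virtual sequence agrees at epoch boundaries
  have hxteq : ∀ k : ℕ, xt (k*τ) = x (k*τ) := by
    intro k
    rcases Nat.eq_zero_or_pos (k*τ) with h | h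
    · rw [h, hxt0]
    · obtain ⟨t, ht⟩ := Nat.exists_eq_succ_of_ne_zero (Nat.pos_iff_ne_zero.1 h)
      rw [ht]
      refine (hxt t).2 ?_
      have h2 : t + 1 = k * τ := by omega
      rw [h2]
      exact Nat.mul_mod_left k τ
  -- main chaining claim over full epochs
  have claim : ∀ k : ℕ, k*τ ≤ T+1 →
      f (x (k*τ)) ≤ f (x 0) - γ/4 * ∑ t ∈ Finset.range (k*τ), ‖gradient f (x t)‖^2
        + 2633*L^2*γ^3*(k*τ)*σ2 := by
    intro k
    induction k with
    | zero => intro _; simp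
    | succ k ih =>
      intro hk1
      have hstep : k*τ + τ ≤ T+1 := by rw [Nat.succ_mul] at hk1; omega
      have hk0 : k*τ ≤ T+1 := by omega
      have ihk := ih hk0
      have hkdiv : k ≤ T / τ := (Nat.le_div_iff_mul_le hτpos).2 (by omega)
      obtain ⟨E, hEdef⟩ : ∃ v : EuclideanSpace ℝ (Fin d),
          v = ∑ t ∈ Finset.Ico (k*τ) (k*τ+τ),
            (gradient (f' (idx t)) (x t) - gradient f (x t)) := ⟨_, rfl⟩
      have hsplit : (∑ t ∈ Finset.Ico (k*τ) (k*τ+τ), gradient f (x t)) + E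
          = ∑ t ∈ Finset.Ico (k*τ) (k*τ+τ), gradient (f' (idx t)) (x t) := by
        rw [hEdef, ← Finset.sum_add_distrib]
        exact Finset.sum_congr rfl fun t _ => by abel
      have hq : x (k*τ+τ) = x (k*τ)
          - γ • ((∑ t ∈ Finset.Ico (k*τ) (k*τ+τ), gradient f (x t)) + E) := by
        have hu := iter_unfold x (fun t => gradient (f' (idx t)) (x t)) γ (k*τ) τ
          (fun t _ _ => hx t) τ le_rfl
        rw [hu, hsplit]
      have hEb : ‖E‖ ≤ s + 2*L*∑ t ∈ Finset.Ico (k*τ) (k*τ+τ), ‖x t - x (k*τ)‖ := by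
        rw [hEdef]
        have := hEall k hkdiv (τ-1) (by omega) (by omega)
        have heq : k*τ + (τ-1) + 1 = k*τ + τ := by omega
        rwa [heq] at this
      have hepoch := epoch_lemma f L γ s hL hγ0 hs0 hdesc hflipf
        x (fun t => gradient (f' (idx t)) (x t)) (k*τ) τ hτpos
        (fun t _ _ => hx t) hB2
        (fun j hj => hEall k hkdiv j hj (by omega))
        E (Or.inr ⟨hB1, hEb⟩) (x (k*τ+τ)) hq
      have hsum : ∑ t ∈ Finset.range (k*τ+τ), ‖gradient f (x t)‖^2
          = (∑ t ∈ Finset.range (k*τ), ‖gradient f (x t)‖^2)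
            + ∑ t ∈ Finset.Ico (k*τ) (k*τ+τ), ‖gradient f (x t)‖^2 := by
        have h0 : Finset.range (k*τ+τ) = Finset.Ico 0 (k*τ+τ) := Finset.range_eq_Ico _
        have h1 : Finset.range (k*τ) = Finset.Ico 0 (k*τ) := Finset.range_eq_Ico _
        rw [h0, h1]
        exact (Finset.sum_Ico_consecutive _ (Nat.zero_le _) (Nat.le_add_right _ _)).symm
      have hmul : Nat.succ k * τ = k*τ+τ := by rw [Nat.succ_mul]
      rw [hmul, hsum]
      push_cast
      rw [hss] at hepoch
      push_cast at ihk hepoch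
      linarith
  -- endgame
  have hdm := Nat.div_add_mod (T+1) τ
  rw [Nat.mul_comm] at hdm
  by_cases hr : (T+1) % τ = 0
  · have hTK : ((T+1)/τ) * τ = T+1 := by omega
    have hxtT : xt (T+1) = x (T+1) := (hxt T).2 hr
    have hc := claim ((T+1)/τ) (by omega)
    rw [hTK] at hc
    rw [hxtT]
    have hTKR : (((T+1)/τ : ℕ):ℝ) * ((τ:ℕ):ℝ) = (T:ℝ)+1 := by exact_mod_cast congrArg (Nat.cast : ℕ → ℝ) hTK
    push_cast at hc ⊢
    rw [hTKR] at hc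
    linarith [hc]
  · -- partial last epoch
    set K := (T+1)/τ with hK
    set r := (T+1) % τ with hrdef
    have hrτ : r < τ := Nat.mod_lt _ hτpos
    have hr1 : 1 ≤ r := Nat.pos_iff_ne_zero.2 hr
    have hKT : K*τ + r = T+1 := hdm
    have hKdiv : K ≤ T / τ := (Nat.le_div_iff_mul_le hτpos).2 (by omega)
    have hc := claim K (by omega)
    have hB2r : L * γ * (r:ℝ) ≤ 3/41 := by
      have hcast : (r:ℝ) ≤ (τ:ℝ) := by exact_mod_cast hrτ.le
      exact le_trans (mul_le_mul_of_nonneg_left hcast (by positivity)) hB2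
    -- recursion for virtual sequence within last epoch
    have hrecxt : ∀ t, K*τ ≤ t → t < K*τ + r → xt (t+1) = xt t - γ • gradient f (x t) := by
      intro t h1 h2
      refine (hxt t).1 ?_
      have ht : t + 1 = (t + 1 - K*τ) + K*τ := by omega
      rw [ht, Nat.add_mul_mod_self_right]
      have hlt : t + 1 - K*τ < τ := by omega
      rw [Nat.mod_eq_of_lt hlt]
      omega
    have hq : xt (T+1) = x (K*τ)
        - γ • ((∑ t ∈ Finset.Ico (K*τ) (K*τ+r), gradient f (x t)) + 0) := by
      have hu := iter_unfold xt (fun t => gradient f (x t)) γ (K*τ) r hrecxt r le_rfl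
      rw [show T+1 = K*τ+r from hKT.symm, hu, hxteq K, add_zero]
    have hepoch := epoch_lemma f L γ s hL hγ0 hs0 hdesc hflipf
      x (fun t => gradient (f' (idx t)) (x t)) (K*τ) r hr1
      (fun t _ _ => hx t) hB2r
      (fun j hj => hEall K hKdiv j (by omega) (by omega))
      0 (Or.inl rfl) (xt (T+1)) hq
    have hsum : ∑ t ∈ Finset.range (T+1), ‖gradient f (x t)‖^2
        = (∑ t ∈ Finset.range (K*τ), ‖gradient f (x t)‖^2)
          + ∑ t ∈ Finset.Ico (K*τ) (K*τ+r), ‖gradient f (x t)‖^2 := by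
      have h0 : Finset.range (T+1) = Finset.Ico 0 (K*τ+r) := by rw [hKT, Finset.range_eq_Ico]
      have h1 : Finset.range (K*τ) = Finset.Ico 0 (K*τ) := Finset.range_eq_Ico _
      rw [h0, h1]
      exact (Finset.sum_Ico_consecutive _ (Nat.zero_le _) (Nat.le_add_right _ _)).symm
    rw [hsum]
    rw [hss] at hepoch
    have hcast : ((K*τ:ℕ):ℝ) + (r:ℝ) = (T:ℝ)+1 := by exact_mod_cast congrArg (Nat.cast : ℕ → ℝ) hKT
    push_cast at hc hepoch hcast ⊢
    have hcoef : 2633*L^2*γ^3*((K:ℝ)*(τ:ℝ))*σ2 + 2633*L^2*γ^3*(r:ℝ)*σ2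
        = 2633*L^2*γ^3*((T:ℝ)+1)*σ2 := by rw [← hcast]; ring
    linarith [hc, hepoch, hcoef]
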